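/- arXiv:1402.2963 — 5 statements merged into one kernel-verified Lean document; each statement's English description precedes it below -/
import Mathlib

section
/- Let d ≥ 1, let 0 ≤ m ≤ d, let ρ be any bijection of {0,1}^d, and let G be the pair of d-dimensional butterflies with gluing bijection ρ. Then for every set A of input nodes of G and every set B of output nodes of G with |A| = |B| = 2^m, there exists a node-disjoint routing from A to B; that is, every pair of d-dimensional butterflies is a 2^m-concentrator. -/
/-- Edge relation of a pair of `d`-dimensional standard butterflies glued by the
bijection `ρ` of `{0,1}^d`: the layer-`d` vertex labelled `b` of the left butterfly
(layers `0,…,d`) is identified with the layer-`d` input vertex labelled `ρ b` of the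
right butterfly (layers `d,…,2d`).  Labels of vertices on layers `0,…,d` are left-labels
and labels on layers `d+1,…,2d` are right-labels.  `pairStep d ρ i b b'` says there is a
directed edge from the vertex with label `b` on layer `i` to the vertex with label `b'`
on layer `i+1`: crossing the `(i+1)`-st layer of edges of a standard butterfly may change
exactly coordinate `i+1` (`0`-based: coordinate `i`), and at the glue layer `i = d` the
left label `b` is first translated to the right label `ρ b`. -/
def pairStep (d : ℕ) (ρ : (Fin d → Bool) ≃ (Fin d → Bool)) (i : ℕ)
    (b b' : Fin d → Bool) : Prop :=
  if h : i < d then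
    ∀ k : Fin d, k ≠ ⟨i, h⟩ → b k = b' k
  else if h' : i < 2 * d then
    ∀ k : Fin d, k ≠ (⟨i - d, by omega⟩ : Fin d) →
      (if i = d then ρ b else b) k = b' k
  else False

/-!
Order the input set `A` by the binary number a label spells (coordinate `j` having weight `2^j`)
and send the input of rank `r` through the left butterfly to a glue vertex whose first `m`
coordinates spell `r`. Two such paths meeting on layer `i` would have inputs agreeing from
coordinate `i` on, so lying in one block of `2^i` consecutive numbers and thus having ranks less
than `2^i` apart, and glue vertices agreeing below coordinate `i`, so having ranks congruent
modulo `2^min(i, m)`: impossible. Read backwards (layers and coordinates reversed), the right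
butterfly is again a butterfly, and the same argument routes each glue vertex to the output
whose rank in `B`, with coordinates reversed, is spelled by the last `m` coordinates of the glue
vertex's right label. The glue vertices can be chosen so that these spelled ranks are distinct:
every pattern of `m` coordinates is shared by exactly `2^(d-m)` labels, so Hall's condition holds.
-/

open Finset Function

/-- Hall's theorem for a bipartite graph on `Y ⊔ Z` whose edges are the elements of `X`, the edge
`x` joining `p x` to `q x`. -/
theorem Finset.exists_injective_of_card_fiber {X Y Z : Type*} [Fintype X] [DecidableEq Y]
    [DecidableEq Z] (p : X → Y) (q : X → Z) {k : ℕ} (hk : 0 < k)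
    (hp : ∀ y, k ≤ #{x | p x = y}) (hq : ∀ z, #{x | q x = z} ≤ k) :
    ∃ σ : Y → Z, Injective σ ∧ ∀ y, ∃ x, p x = y ∧ q x = σ y := by
  have hall : ∀ s : Finset Y,
      #s ≤ #(s.biUnion fun y => ({x | p x = y} : Finset X).image q) := by
    intro s
    have hunion : s.biUnion (fun y => ({x | p x = y} : Finset X).image q) =
        ({x | p x ∈ s} : Finset X).image q := by
      ext z
      simp only [mem_biUnion, mem_image, mem_filter, mem_univ, true_and]
      grind
    refine Nat.le_of_mul_le_mul_left ?_ hk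
    calc k * #s = ∑ _ ∈ s, k := by rw [sum_const, smul_eq_mul, mul_comm]
      _ ≤ ∑ y ∈ s, #{x | p x = y} := sum_le_sum fun y _ => hp y
      _ = #{x | p x ∈ s} := sum_card_fiberwise_eq_card_filter _ _ _
      _ ≤ k * #(({x | p x ∈ s} : Finset X).image q) :=
          card_le_mul_card_image _ _ fun z _ => (card_le_card (monotone_filter_left _
            (filter_subset _ _))).trans (hq z)
      _ = k * #(s.biUnion fun y => ({x | p x = y} : Finset X).image q) := by rw [hunion]
  obtain ⟨σ, hσ, hmem⟩ := (all_card_le_biUnion_card_iff_exists_injective _).1 hall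
  exact ⟨σ, hσ, fun y => by simpa using hmem y⟩

namespace Butterfly

variable {d m : ℕ}

def key (c : Fin d → Bool) : ℕ := ∑ j, (c j).toNat * 2 ^ (j : ℕ)

theorem key_succ (c : Fin (d + 1) → Bool) : key c = Nat.bit (c 0) (key (Fin.tail c)) := by
  simp only [key, Fin.sum_univ_succ, Nat.bit_val, mul_sum, Fin.val_succ, Fin.val_zero,
    Fin.tail, pow_succ]
  ring_nf

theorem testBit_key (c : Fin d → Bool) (j : ℕ) :
    (key c).testBit j = if h : j < d then c ⟨j, h⟩ else false := by
  induction d generalizing j with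
  | zero => simp [key]
  | succ d ih =>
    rw [key_succ]
    cases j with
    | zero => simp
    | succ j =>
      rw [Nat.testBit_bit_succ, ih]
      simp [Fin.tail, Fin.succ]

theorem testBit_key_val (c : Fin d → Bool) (j : Fin d) : (key c).testBit j = c j := by
  simp [testBit_key]

theorem key_lt_two_pow (c : Fin d → Bool) : key c < 2 ^ d :=
  Nat.lt_pow_two_of_testBit _ fun i hi => by simp [testBit_key, Nat.not_lt.2 hi]

theorem key_injective : Injective (key (d := d)) := fun c c' h =>
  funext fun j => by rw [← testBit_key_val c, h, testBit_key_val]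

theorem key_testBit {x : ℕ} (hx : x < 2 ^ d) : key (fun j : Fin d => x.testBit j) = x :=
  Nat.eq_of_testBit_eq fun i => by
    rw [testBit_key]
    split_ifs with hi
    · rfl
    · exact (Nat.testBit_eq_false_of_lt
        (hx.trans_le (Nat.pow_le_pow_right two_pos (by omega)))).symm

theorem key_mod_two_pow_eq {c c' : Fin d → Bool} {i : ℕ}
    (h : ∀ j : Fin d, (j : ℕ) < i → c j = c' j) : key c % 2 ^ i = key c' % 2 ^ i :=
  Nat.eq_of_testBit_eq fun k => by
    simp only [Nat.testBit_mod_two_pow, testBit_key]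
    by_cases hk : k < i <;> by_cases hkd : k < d <;> simp [hk, hkd, h ⟨k, _⟩]

theorem key_div_two_pow_eq {c c' : Fin d → Bool} {i : ℕ}
    (h : ∀ j : Fin d, i ≤ (j : ℕ) → c j = c' j) : key c / 2 ^ i = key c' / 2 ^ i :=
  Nat.eq_of_testBit_eq fun k => by
    simp only [Nat.testBit_div_two_pow, testBit_key]
    split_ifs with hk
    · exact h _ (by simp)
    · rfl

def lowBits (m : ℕ) (c : Fin d → Bool) : Fin (2 ^ m) :=
  ⟨key c % 2 ^ m, Nat.mod_lt _ (Nat.two_pow_pos m)⟩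

@[simp]
theorem val_lowBits (m : ℕ) (c : Fin d → Bool) : (lowBits m c : ℕ) = key c % 2 ^ m := rfl

theorem card_lowBits_eq (hm : m ≤ d) (r : Fin (2 ^ m)) :
    #{c : Fin d → Bool | lowBits m c = r} = 2 ^ (d - m) := by
  have hlow : ∀ x : ℕ, x % 2 ^ m = r ↔ x ≡ r [MOD 2 ^ m] := fun x => by
    rw [Nat.ModEq, Nat.mod_eq_of_lt r.isLt]
  calc #{c : Fin d → Bool | lowBits m c = r}
      = #{x ∈ range (2 ^ d) | x ≡ r [MOD 2 ^ m]} := by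
        refine card_nbij' key (fun x j => x.testBit j) ?_ ?_ ?_ ?_
        · intro c hc
          simp_all [Fin.ext_iff, key_lt_two_pow]
        · intro x hx
          simp_all [Fin.ext_iff, key_testBit]
        · intro c _
          exact funext (testBit_key_val c)
        · intro x hx
          simp_all [key_testBit]
    _ = 2 ^ (d - m) := by
        rw [← Nat.count_eq_card_filter_range, Nat.count_modEq_card _ (Nat.two_pow_pos m),
          Nat.pow_div hm two_pos, Nat.mod_eq_zero_of_dvd (pow_dvd_pow 2 hm)]
        simp

theorem exists_injective_lowBits (hm : m ≤ d) (e : Equiv.Perm (Fin d → Bool)) :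
    ∃ σ : Fin (2 ^ m) → Fin (2 ^ m), Injective σ ∧
      ∀ r, ∃ c, lowBits m c = r ∧ lowBits m (e c) = σ r :=
  exists_injective_of_card_fiber _ _ (Nat.two_pow_pos (d - m))
    (fun r => (card_lowBits_eq hm r).ge) fun r => by
      rw [← card_lowBits_eq hm r]
      exact (card_equiv e fun c => by simp).le

def rank (S : Finset (Fin d → Bool)) (a : Fin d → Bool) : ℕ := #{x ∈ S | key x < key a}

section Rank

variable {S : Finset (Fin d → Bool)} {a a' : Fin d → Bool}

theorem rank_lt_card (ha : a ∈ S) : rank S a < #S :=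
  card_lt_card (filter_ssubset.2 ⟨a, ha, lt_irrefl _⟩)

theorem rank_lt_rank (ha : a ∈ S) (h : key a < key a') : rank S a < rank S a' :=
  card_lt_card <| (ssubset_iff_of_subset fun x hx => by simp_all; omega).2
    ⟨a, by simp [ha, h], by simp⟩

theorem rank_le_rank_add (h : key a ≤ key a') : rank S a' ≤ rank S a + (key a' - key a) := by
  calc rank S a' = rank S a + #{x ∈ S | key a ≤ key x ∧ key x < key a'} := by
        rw [rank, rank,
          ← card_union_of_disjoint (disjoint_filter.2 fun _ _ h₁ h₂ => by omega)]
        congr 1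
        ext x
        simp only [mem_filter, mem_union]
        grind
    _ ≤ rank S a + #(Ico (key a) (key a')) := by
        gcongr
        exact card_le_card_of_injOn key (fun x hx => by simp_all) key_injective.injOn
    _ = rank S a + (key a' - key a) := by rw [Nat.card_Ico]

theorem rank_injOn : Set.InjOn (rank S) S := fun a ha a' ha' h => by
  by_contra hne
  rcases lt_or_gt_of_ne (key_injective.ne hne) with hlt | hlt
  · exact (rank_lt_rank ha hlt).ne h
  · exact (rank_lt_rank ha' hlt).ne h.symm

theorem exists_rank_eq {t : ℕ} (ht : t < #S) : ∃ b ∈ S, rank S b = t := by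
  obtain ⟨b, hb, hbt⟩ := surj_on_of_inj_on_of_card_le (t := range #S) (fun b _ => rank S b)
    (fun b hb => mem_range.2 (rank_lt_card hb)) (fun _ _ h₁ h₂ h => rank_injOn h₁ h₂ h)
    (by simp) t (mem_range.2 ht)
  exact ⟨b, hb, hbt.symm⟩

theorem rank_mod_two_pow_ne (ha : a ∈ S) (ha' : a' ∈ S) (hne : a ≠ a') {i : ℕ}
    (h : key a / 2 ^ i = key a' / 2 ^ i) : rank S a % 2 ^ i ≠ rank S a' % 2 ^ i := by
  wlog hlt : key a < key a' generalizing a a'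
  · exact (this ha' ha hne.symm h.symm
      (lt_of_le_of_ne (not_lt.1 hlt) (key_injective.ne hne.symm))).symm
  have hblock : key a' < key a + 2 ^ i := by
    have := Nat.div_add_mod (key a) (2 ^ i)
    have := Nat.div_add_mod (key a') (2 ^ i)
    have := Nat.mod_lt (key a') (Nat.two_pow_pos i)
    rw [h] at *
    omega
  have h₁ := rank_lt_rank (S := S) ha hlt
  have h₂ := rank_le_rank_add (S := S) hlt.le
  intro hmod
  have := Nat.ModEq.eq_of_abs_lt hmod (by rw [abs_sub_lt_iff]; omega)
  omega

end Rank

/-- Layer `i` of the unique path from `a` on layer `0` to `c` on layer `d` of a standard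
butterfly. -/
def butterflyPath (a c : Fin d → Bool) (i : ℕ) : Fin d → Bool :=
  fun j => if (j : ℕ) < i then c j else a j

@[simp]
theorem butterflyPath_zero (a c : Fin d → Bool) : butterflyPath a c 0 = a :=
  funext fun _ => if_neg (Nat.not_lt_zero _)

theorem butterflyPath_of_le (a c : Fin d → Bool) {i : ℕ} (h : d ≤ i) :
    butterflyPath a c i = c :=
  funext fun j => if_pos (j.2.trans_le h)

theorem butterflyPath_succ_apply (a c : Fin d → Bool) {i : ℕ} {j : Fin d}
    (hj : (j : ℕ) ≠ i) :
    butterflyPath a c (i + 1) j = butterflyPath a c i j := by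
  simp only [butterflyPath]
  split_ifs <;> first | rfl | omega

/-- A butterfly with both its layers and its coordinates reversed is again a butterfly. -/
theorem butterflyPath_comp_rev (s b : Fin d → Bool) {t : ℕ} (ht : t ≤ d) :
    butterflyPath s b t ∘ Fin.rev = butterflyPath (b ∘ Fin.rev) (s ∘ Fin.rev) (d - t) := by
  funext j
  simp only [butterflyPath, comp_apply, Fin.val_rev]
  split_ifs <;> first | rfl | omega

section Disjoint

variable {S : Finset (Fin d → Bool)}

theorem butterflyPath_ne_of_lowBits_eq_rank {a a' c c' : Fin d → Bool}
    (ha : a ∈ S) (ha' : a' ∈ S) (hne : a ≠ a')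
    (hc : (lowBits m c : ℕ) = rank S a) (hc' : (lowBits m c' : ℕ) = rank S a') (i : ℕ) :
    butterflyPath a c i ≠ butterflyPath a' c' i := by
  intro h
  have hlow : ∀ j : Fin d, (j : ℕ) < i → c j = c' j := fun j hj => by
    simpa [butterflyPath, hj] using congrFun h j
  have hhigh : ∀ j : Fin d, i ≤ (j : ℕ) → a j = a' j := fun j hj => by
    simpa [butterflyPath, Nat.not_lt.2 hj] using congrFun h j
  simp only [val_lowBits] at hc hc'
  rcases le_or_gt i m with him | hmi
  · refine rank_mod_two_pow_ne ha ha' hne (key_div_two_pow_eq hhigh) ?_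
    rw [← hc, ← hc', Nat.mod_mod_of_dvd _ (pow_dvd_pow 2 him),
      Nat.mod_mod_of_dvd _ (pow_dvd_pow 2 him), key_mod_two_pow_eq hlow]
  · refine hne (rank_injOn ha ha' ?_)
    rw [← hc, ← hc']
    exact key_mod_two_pow_eq fun j hj => hlow j (hj.trans hmi)

theorem butterflyPath_ne_of_lowBits_rev_eq_rank {b b' s s' : Fin d → Bool}
    (hb : b ∘ Fin.rev ∈ S) (hb' : b' ∘ Fin.rev ∈ S) (hne : b ≠ b')
    (hs : (lowBits m (s ∘ Fin.rev) : ℕ) = rank S (b ∘ Fin.rev))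
    (hs' : (lowBits m (s' ∘ Fin.rev) : ℕ) = rank S (b' ∘ Fin.rev)) {t : ℕ} (ht : t ≤ d) :
    butterflyPath s b t ≠ butterflyPath s' b' t := fun h =>
  butterflyPath_ne_of_lowBits_eq_rank hb hb' (Fin.rev_surjective.injective_comp_right.ne hne)
    hs hs' (d - t) <| by
      rw [← butterflyPath_comp_rev _ _ ht, ← butterflyPath_comp_rev _ _ ht, h]

end Disjoint

/-- The path through the pair of butterflies that runs from input `a` to the glue vertex with
left label `c`, and from there (right label `ρ c`) to output `b`. -/
def pairPath (ρ : (Fin d → Bool) ≃ (Fin d → Bool)) (a c b : Fin d → Bool) (i : ℕ) :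
    Fin d → Bool :=
  if i ≤ d then butterflyPath a c i else butterflyPath (ρ c) b (i - d)

section PairPath

variable {ρ : (Fin d → Bool) ≃ (Fin d → Bool)}

theorem pairPath_zero (a c b : Fin d → Bool) : pairPath ρ a c b 0 = a := by
  simp [pairPath]

theorem pairPath_two_mul (hd : 0 < d) (a c b : Fin d → Bool) : pairPath ρ a c b (2 * d) = b := by
  rw [pairPath, if_neg (by omega), butterflyPath_of_le _ _ (by omega)]

theorem pairStep_pairPath (a c b : Fin d → Bool) {i : ℕ} (hi : i < 2 * d) :
    pairStep d ρ i (pairPath ρ a c b i) (pairPath ρ a c b (i + 1)) := by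
  unfold pairStep pairPath
  rcases lt_trichotomy i d with h | rfl | h
  · rw [dif_pos h, if_pos h.le, if_pos (Nat.succ_le_of_lt h)]
    exact fun k hk => (butterflyPath_succ_apply a c fun h' => hk (Fin.ext h')).symm
  · rw [dif_neg (lt_irrefl _), dif_pos hi, if_pos rfl, if_pos le_rfl, if_neg (by omega),
      butterflyPath_of_le _ _ le_rfl, Nat.add_sub_cancel_left]
    exact fun k hk => (if_neg fun h' => hk (Fin.ext (by simp only [Nat.sub_self]; omega))).symm
  · rw [dif_neg (by omega), dif_pos hi, if_neg h.ne', if_neg (by omega), if_neg (by omega),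
      Nat.sub_add_comm h.le]
    exact fun k hk => (butterflyPath_succ_apply _ _ fun h' => hk (Fin.ext h')).symm

theorem pairPath_ne {S T : Finset (Fin d → Bool)} {a a' c c' b b' : Fin d → Bool}
    (ha : a ∈ S) (ha' : a' ∈ S) (hne : a ≠ a')
    (hb : b ∘ Fin.rev ∈ T) (hb' : b' ∘ Fin.rev ∈ T) (hbne : b ≠ b')
    (hc : (lowBits m c : ℕ) = rank S a) (hc' : (lowBits m c' : ℕ) = rank S a')
    (hs : (lowBits m (ρ c ∘ Fin.rev) : ℕ) = rank T (b ∘ Fin.rev))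
    (hs' : (lowBits m (ρ c' ∘ Fin.rev) : ℕ) = rank T (b' ∘ Fin.rev))
    {i : ℕ} (hi : i ≤ 2 * d) :
    pairPath ρ a c b i ≠ pairPath ρ a' c' b' i := by
  unfold pairPath
  split_ifs
  · exact butterflyPath_ne_of_lowBits_eq_rank ha ha' hne hc hc' i
  · exact butterflyPath_ne_of_lowBits_rev_eq_rank hb hb' hbne hs hs' (by omega)

end PairPath

theorem exists_routing (hm : m ≤ d) (ρ : (Fin d → Bool) ≃ (Fin d → Bool))
    {A B : Finset (Fin d → Bool)} (hA : #A = 2 ^ m) (hB : #B = 2 ^ m) :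
    ∃ c b : (Fin d → Bool) → Fin d → Bool, Set.InjOn b A ∧ ∀ a ∈ A, b a ∈ B ∧
      (lowBits m (c a) : ℕ) = rank A a ∧
      (lowBits m (ρ (c a) ∘ Fin.rev) : ℕ) =
        rank (B.image (· ∘ Fin.rev)) (b a ∘ Fin.rev) := by
  have hrev : Involutive fun b : Fin d → Bool => b ∘ Fin.rev := fun b => by ext; simp
  set T := B.image (· ∘ Fin.rev)
  have hT : #T = 2 ^ m := by rw [card_image_of_injective _ hrev.injective, hB]
  obtain ⟨σ, hσ, hmatch⟩ := exists_injective_lowBits hm (ρ.trans (hrev.toPerm _))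
  choose c hc hcσ using hmatch
  have hout : ∀ s : Fin (2 ^ m), ∃ b ∈ B, rank T (b ∘ Fin.rev) = s := fun s => by
    obtain ⟨b₀, hb₀, hrank⟩ := exists_rank_eq (S := T) (s.isLt.trans_eq hT.symm)
    obtain ⟨b, hb, rfl⟩ := mem_image.1 hb₀
    exact ⟨b, hb, hrank⟩
  choose b hb hbrank using hout
  let r : (Fin d → Bool) → Fin (2 ^ m) := fun a => Fin.ofNat _ (rank A a)
  have hr : ∀ a ∈ A, (r a : ℕ) = rank A a := fun a ha =>
    Nat.mod_eq_of_lt (hA ▸ rank_lt_card ha)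
  refine ⟨c ∘ r, b ∘ σ ∘ r, fun a ha a' ha' h => ?_, fun a ha =>
    ⟨hb _, (congrArg Fin.val (hc _)).trans (hr a ha),
      (congrArg Fin.val (hcσ _)).trans (hbrank _).symm⟩⟩
  have hσr : σ (r a) = σ (r a') := Fin.ext <| by
    rw [← hbrank (σ (r a)), ← hbrank (σ (r a'))]
    exact congrArg (fun b => rank T (b ∘ Fin.rev)) h
  exact rank_injOn ha ha' (by rw [← hr a ha, ← hr a' ha', hσ hσr])

end Butterfly

/-- Every pair of `d`-dimensional butterflies is a `2^m`-concentrator (`0 ≤ m ≤ d`):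
for any set `A` of input (layer-`0`) nodes and any set `B` of output (layer-`2d`) nodes
with `|A| = |B| = 2^m`, there is a family of directed paths, one per element of `A`,
pairwise vertex-disjoint (vertices on different layers are automatically distinct, so
disjointness is stated layerwise), starting exactly at the elements of `A` and ending
exactly at the elements of `B`. -/
theorem pair_of_butterflies_pow_two_concentrator
    (d : ℕ) (hd : 1 ≤ d) (m : ℕ) (hm : m ≤ d)
    (ρ : (Fin d → Bool) ≃ (Fin d → Bool))
    (A B : Finset (Fin d → Bool)) (hA : A.card = 2 ^ m) (hB : B.card = 2 ^ m) :
    ∃ P : (Fin d → Bool) → ℕ → (Fin d → Bool),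
      (∀ a ∈ A, P a 0 = a) ∧
      (∀ a ∈ A, ∀ i, i < 2 * d → pairStep d ρ i (P a i) (P a (i + 1))) ∧
      (∀ a ∈ A, ∀ a' ∈ A, a ≠ a' → ∀ i, i ≤ 2 * d → P a i ≠ P a' i) ∧
      A.image (fun a => P a (2 * d)) = B := by
  obtain ⟨c, b, hb_inj, hroute⟩ := Butterfly.exists_routing hm ρ hA hB
  refine ⟨fun a => Butterfly.pairPath ρ a (c a) (b a), fun a _ => Butterfly.pairPath_zero _ _ _,
    fun a _ i hi => Butterfly.pairStep_pairPath _ _ _ hi, fun a ha a' ha' hne i hi => ?_, ?_⟩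
  · obtain ⟨hb, hc, hs⟩ := hroute a ha
    obtain ⟨hb', hc', hs'⟩ := hroute a' ha'
    exact Butterfly.pairPath_ne ha ha' hne (mem_image_of_mem (· ∘ Fin.rev) hb)
      (mem_image_of_mem (· ∘ Fin.rev) hb')
      (fun h => hne (hb_inj ha ha' h)) hc hc' hs hs' hi
  · simp only [Butterfly.pairPath_two_mul hd]
    exact eq_of_subset_of_card_le (image_subset_iff.2 fun a ha => (hroute a ha).1)
      (by rw [card_image_of_injOn hb_inj, hA, hB])
end

section
/- Let d ≥ 1, let 0 ≤ m ≤ d, let ρ be any bijection of {0,1}^d, and let G be the pair of d-dimensional butterflies with gluing bijection ρ. Then for every set A of input nodes and every set B of output nodes with |A| = |B| = 2^d − 2^m, there exists a node-disjoint routing from A to B. -/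
open Finset

namespace Layered

variable {T : Type*}

def IsPath (step : ℕ → T → T → Prop) (L : ℕ) (p : ℕ → T) : Prop :=
  ∀ i < L, step i (p i) (p (i + 1))

def IsSeparator (step : ℕ → T → T → Prop) (L : ℕ) (A B : Finset T) (C : Finset (ℕ × T)) :
    Prop :=
  ∀ p, IsPath step L p → p 0 ∈ A → p L ∈ B → ∃ ℓ ≤ L, (ℓ, p ℓ) ∈ C

def follow (g : ℕ × T → ℕ × T) (a : T) : ℕ → T
  | 0 => a
  | ℓ + 1 => (g (ℓ, follow g a ℓ)).2

variable [Fintype T] [DecidableEq T]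

/- König's reduction to bipartite matching: a system of disjoint paths is encoded by matching
every vertex of `tails L A` (a source or an inner vertex) into `heads L B` (an inner vertex or a
sink), to its successor on its path or, if it lies on no path, to itself. -/

def tails (L : ℕ) (A : Finset T) : Finset (ℕ × T) :=
  (range L ×ˢ univ).filter fun x => x.1 = 0 → x.2 ∈ A

def heads (L : ℕ) (B : Finset T) : Finset (ℕ × T) :=
  (Icc 1 L ×ˢ univ).filter fun y => y.1 = L → y.2 ∈ B

open Classical in
noncomputable def choices (step : ℕ → T → T → Prop) (L : ℕ) (B : Finset T) (x : ℕ × T) :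
    Finset (ℕ × T) :=
  (heads L B).filter fun y => y = x ∨ (y.1 = x.1 + 1 ∧ step x.1 x.2 y.2)

variable {step : ℕ → T → T → Prop} {L : ℕ} {A B : Finset T}

@[simp] lemma mem_tails {x : ℕ × T} : x ∈ tails L A ↔ x.1 < L ∧ (x.1 = 0 → x.2 ∈ A) := by
  simp [tails]

@[simp] lemma mem_heads {y : ℕ × T} :
    y ∈ heads L B ↔ (1 ≤ y.1 ∧ y.1 ≤ L) ∧ (y.1 = L → y.2 ∈ B) := by
  simp [heads]

lemma mem_choices {x y : ℕ × T} :
    y ∈ choices step L B x ↔ y ∈ heads L B ∧ (y = x ∨ (y.1 = x.1 + 1 ∧ step x.1 x.2 y.2)) := by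
  simp [choices]

lemma isSeparator_sdiff {S : Finset (ℕ × T)} (hS : S ⊆ tails L A) :
    IsSeparator step L A B ((A.image (Prod.mk 0) ∪ S.biUnion (choices step L B)) \ S) := by
  intro p hp hp0 hpL
  by_contra! hC
  have mem_of_notMem {x} (hx : x ∈ A.image (Prod.mk 0) ∪ S.biUnion (choices step L B))
      (hxC : x ∉ (A.image (Prod.mk 0) ∪ S.biUnion (choices step L B)) \ S) : x ∈ S := by
    simpa [hx] using hxC
  have hpS : ∀ ℓ ≤ L, (ℓ, p ℓ) ∈ S := by
    intro ℓ
    induction ℓ with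
    | zero => exact fun _ => mem_of_notMem (by simp [hp0]) (hC 0 (Nat.zero_le _))
    | succ ℓ ih =>
      intro hℓ
      refine mem_of_notMem (mem_union_right _ (mem_biUnion.mpr ⟨_, ih (by omega), ?_⟩))
        (hC (ℓ + 1) hℓ)
      refine mem_choices.mpr ⟨mem_heads.mpr ⟨⟨Nat.le_add_left 1 ℓ, hℓ⟩, ?_⟩, Or.inr ⟨rfl, hp ℓ hℓ⟩⟩
      rintro (h : ℓ + 1 = L)
      rwa [h]
  exact absurd (mem_tails.mp (hS (hpS L le_rfl))).1 (lt_irrefl L)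

lemma card_le_card_biUnion_choices
    (hsep : ∀ C, IsSeparator step L A B C → #A ≤ #C) {S : Finset (ℕ × T)}
    (hS : S ⊆ tails L A) : #S ≤ #(S.biUnion (choices step L B)) := by
  set N := S.biUnion (choices step L B)
  have hSsub : S ⊆ A.image (Prod.mk 0) ∪ N := by
    intro x hx
    obtain ⟨hxL, hxA⟩ := mem_tails.mp (hS hx)
    rcases Nat.eq_zero_or_pos x.1 with h0 | hpos
    · exact mem_union_left _ (mem_image.mpr ⟨x.2, hxA h0, Prod.ext h0.symm rfl⟩)
    · refine mem_union_right _ (mem_biUnion.mpr ⟨x, hx, mem_choices.mpr ⟨?_, Or.inl rfl⟩⟩)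
      exact mem_heads.mpr ⟨⟨hpos, hxL.le⟩, fun h => absurd h hxL.ne⟩
  have hcut := hsep _ (isSeparator_sdiff (B := B) hS)
  rw [card_sdiff_of_subset hSsub] at hcut
  have := card_union_le (A.image (Prod.mk 0)) N
  rw [card_image_of_injective _ (Prod.mk_right_injective 0)] at this
  have := card_le_card hSsub
  omega

lemma exists_matching (hsep : ∀ C, IsSeparator step L A B C → #A ≤ #C) :
    ∃ g : ℕ × T → ℕ × T,
      Set.InjOn g (tails L A) ∧ ∀ x ∈ tails L A, g x ∈ choices step L B x := by
  obtain ⟨f, hf, hfx⟩ := (all_card_le_biUnion_card_iff_existsInjective'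
    fun x : tails L A => choices step L B x).mp fun s => by
      have := card_le_card_biUnion_choices hsep (S := s.image Subtype.val) fun x hx => by
        obtain ⟨y, -, rfl⟩ := mem_image.mp hx
        exact y.2
      rwa [image_biUnion, card_image_of_injective _ Subtype.val_injective] at this
  classical
  refine ⟨fun x => if hx : x ∈ tails L A then f ⟨x, hx⟩ else x, ?_, fun x hx => ?_⟩
  · intro x hx y hy hxy
    simp only [dif_pos (mem_coe.mp hx), dif_pos (mem_coe.mp hy)] at hxy
    exact congrArg Subtype.val (hf hxy)
  · simpa only [dif_pos hx] using hfx ⟨x, hx⟩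

section Follow

variable {g : ℕ × T → ℕ × T} (hinj : Set.InjOn g (tails L A))
  (hg : ∀ x ∈ tails L A, g x ∈ choices step L B x)

include hg in
lemma step_of_apply_ne {x : ℕ × T} (hx : x ∈ tails L A) (hne : g x ≠ x) :
    g x = (x.1 + 1, (g x).2) ∧ step x.1 x.2 (g x).2 := by
  obtain ⟨-, hself | ⟨hlayer, hstep⟩⟩ := mem_choices.mp (hg x hx)
  · exact absurd hself hne
  · exact ⟨Prod.ext hlayer rfl, hstep⟩

include hinj hg in
lemma follow_mem_tails_and_ne {a : T} (ha : a ∈ A) : ∀ ℓ < L,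
    (ℓ, follow g a ℓ) ∈ tails L A ∧ g (ℓ, follow g a ℓ) ≠ (ℓ, follow g a ℓ) := by
  intro ℓ
  induction ℓ with
  | zero =>
    intro hL
    have hx : ((0 : ℕ), follow g a 0) ∈ tails L A := mem_tails.mpr ⟨hL, fun _ => ha⟩
    refine ⟨hx, fun hself => ?_⟩
    have := (mem_choices.mp (hg _ hx)).1
    rw [hself, mem_heads] at this
    exact absurd this.1.1 (by simp)
  | succ ℓ ih =>
    intro hℓ
    obtain ⟨hprev, hne⟩ := ih (by omega)
    have hx : (ℓ + 1, follow g a (ℓ + 1)) ∈ tails L A := mem_tails.mpr ⟨hℓ, by omega⟩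
    refine ⟨hx, fun hself => ?_⟩
    have := hinj hprev hx ((step_of_apply_ne hg hprev hne).1.trans hself.symm)
    simp at this

include hinj hg in
lemma apply_follow {a : T} (ha : a ∈ A) {ℓ : ℕ} (hℓ : ℓ < L) :
    g (ℓ, follow g a ℓ) = (ℓ + 1, follow g a (ℓ + 1)) ∧
      step ℓ (follow g a ℓ) (follow g a (ℓ + 1)) :=
  let ⟨hx, hne⟩ := follow_mem_tails_and_ne hinj hg ha ℓ hℓ
  step_of_apply_ne hg hx hne

include hinj hg in
lemma follow_ne {a a' : T} (ha : a ∈ A) (ha' : a' ∈ A) (hne : a ≠ a') :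
    ∀ ℓ ≤ L, follow g a ℓ ≠ follow g a' ℓ := by
  intro ℓ
  induction ℓ with
  | zero => exact fun _ => hne
  | succ ℓ ih =>
    intro (hℓ : ℓ < L) heq
    have hx := (follow_mem_tails_and_ne hinj hg ha ℓ hℓ).1
    have hx' := (follow_mem_tails_and_ne hinj hg ha' ℓ hℓ).1
    refine ih hℓ.le (congrArg Prod.snd (hinj hx hx' ?_))
    rw [(apply_follow hinj hg ha hℓ).1, (apply_follow hinj hg ha' hℓ).1, heq]

include hinj hg in
lemma follow_mem {a : T} (ha : a ∈ A) (hL : 0 < L) : follow g a L ∈ B := by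
  obtain ⟨n, rfl⟩ : ∃ n, L = n + 1 := ⟨L - 1, by omega⟩
  have hhead := (mem_choices.mp (hg _ (follow_mem_tails_and_ne hinj hg ha n n.lt_succ_self).1)).1
  rw [(apply_follow hinj hg ha n.lt_succ_self).1, mem_heads] at hhead
  exact hhead.2 rfl

end Follow

theorem exists_disjoint_paths (hL : 0 < L) (hAB : #B = #A)
    (hsep : ∀ C, IsSeparator step L A B C → #A ≤ #C) :
    ∃ P : T → ℕ → T, (∀ a ∈ A, P a 0 = a) ∧ (∀ a ∈ A, IsPath step L (P a)) ∧
      (∀ a ∈ A, ∀ a' ∈ A, a ≠ a' → ∀ ℓ ≤ L, P a ℓ ≠ P a' ℓ) ∧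
      A.image (fun a => P a L) = B := by
  obtain ⟨g, hinj, hg⟩ := exists_matching hsep
  refine ⟨follow g, fun a _ => rfl, fun a ha ℓ hℓ => (apply_follow hinj hg ha hℓ).2,
    fun a ha a' ha' => follow_ne hinj hg ha ha', eq_of_subset_of_card_le ?_ ?_⟩
  · intro b hb
    obtain ⟨a, ha, rfl⟩ := mem_image.mp hb
    exact follow_mem hinj hg ha hL
  · rw [hAB, card_image_of_injOn fun a ha a' ha' h =>
      by_contra fun hne => follow_ne hinj hg ha ha' hne L le_rfl h]

end Layered

namespace Butterfly

open Layered

variable {d : ℕ}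

def splice (u w : Fin d → Bool) (ℓ : ℕ) : Fin d → Bool :=
  fun k => if (k : ℕ) < ℓ then u k else w k

lemma splice_zero (u w : Fin d → Bool) : splice u w 0 = w :=
  funext fun _ => if_neg (Nat.not_lt_zero _)

lemma splice_of_le (u w : Fin d → Bool) {ℓ : ℕ} (h : d ≤ ℓ) : splice u w ℓ = u :=
  funext fun k => if_pos (k.2.trans_le h)

lemma splice_succ_apply (u w : Fin d → Bool) {ℓ : ℕ} {k : Fin d} (hk : (k : ℕ) ≠ ℓ) :
    splice u w ℓ k = splice u w (ℓ + 1) k := by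
  unfold splice
  split_ifs <;> first | rfl | omega

lemma card_filter_splice_eq_le (ℓ : ℕ) (v : Fin d → Bool) :
    #(univ.filter fun p : (Fin d → Bool) × (Fin d → Bool) => splice p.1 p.2 ℓ = v) ≤ 2 ^ d := by
  calc _ ≤ #(univ : Finset (Fin d → Bool)) := by
        refine card_le_card_of_injOn (fun p => splice p.2 p.1 ℓ) (fun _ _ => mem_univ _) ?_
        intro p hp q hq hpq
        simp only [coe_filter, mem_univ, true_and, Set.mem_ofPred_eq] at hp hq
        have h1 := congrFun (hp.trans hq.symm)
        have h2 := congrFun hpq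
        ext k <;> by_cases hk : (k : ℕ) < ℓ <;>
          first | simpa [splice, hk] using h1 k | simpa [splice, hk] using h2 k
    _ = 2 ^ d := by simp

variable (ρ : (Fin d → Bool) ≃ (Fin d → Bool))

def path (a y b : Fin d → Bool) (ℓ : ℕ) : Fin d → Bool :=
  if ℓ ≤ d then splice y a ℓ else splice b (ρ y) (ℓ - d)

lemma path_zero (a y b : Fin d → Bool) : path ρ a y b 0 = a := by
  simp [path, splice_zero]

lemma path_two_mul (a y b : Fin d → Bool) : path ρ a y b (2 * d) = b := by
  rcases Nat.eq_zero_or_pos d with rfl | hd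
  · exact Subsingleton.elim _ _
  · simp [path, show ¬ 2 * d ≤ d by omega, splice_of_le _ _ (show d ≤ 2 * d - d by omega)]

lemma isPath_path (a y b : Fin d → Bool) : IsPath (pairStep d ρ) (2 * d) (path ρ a y b) := by
  intro i hi
  unfold pairStep
  rcases lt_trichotomy i d with hlt | rfl | hgt
  · rw [dif_pos hlt]
    intro k hk
    simp only [path, if_pos hlt.le, if_pos (Nat.succ_le_of_lt hlt)]
    exact splice_succ_apply _ _ fun h => hk (Fin.ext h)
  · rw [dif_neg (lt_irrefl i), dif_pos hi, if_pos rfl]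
    intro k hk
    simp only [path, if_pos le_rfl, splice_of_le _ _ le_rfl, if_neg (by omega : ¬ i + 1 ≤ i),
      Nat.add_sub_cancel_left]
    rw [← splice_succ_apply (ℓ := 0) _ _ fun h => hk (Fin.ext (by simp [h])), splice_zero]
  · rw [dif_neg (by omega), dif_pos hi, if_neg hgt.ne']
    intro k hk
    simp only [path, if_neg (by omega : ¬ i ≤ d), if_neg (by omega : ¬ i + 1 ≤ d),
      show i + 1 - d = i - d + 1 by omega]
    exact splice_succ_apply _ _ fun h => hk (Fin.ext h)

variable {A B : Finset (Fin d → Bool)}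

lemma card_filter_path_eq_le (ℓ : ℕ) (v : Fin d → Bool) :
    #((A ×ˢ univ ×ˢ B).filter fun t => path ρ t.1 t.2.1 t.2.2 ℓ = v) ≤ 2 ^ d * max #A #B := by
  by_cases hℓ : ℓ ≤ d
  · calc _ ≤ #((univ.filter fun p : _ × _ => splice p.1 p.2 ℓ = v) ×ˢ B) := by
          refine card_le_card_of_injOn (fun t => ((t.2.1, t.1), t.2.2)) (fun t ht => ?_) ?_
          · simp only [coe_filter, mem_product, mem_univ, true_and, Set.mem_ofPred_eq] at ht
            simpa [path, hℓ, ht.1.2] using ht.2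
          · intro t _ t' _ h
            simp only [Prod.mk.injEq] at h
            exact Prod.ext h.1.2 (Prod.ext h.1.1 h.2)
      _ ≤ 2 ^ d * #B := by
          rw [card_product]; exact Nat.mul_le_mul_right _ (card_filter_splice_eq_le ℓ v)
      _ ≤ _ := Nat.mul_le_mul_left _ (le_max_right _ _)
  · calc _ ≤ #((univ.filter fun p : _ × _ => splice p.1 p.2 (ℓ - d) = v) ×ˢ A) := by
          refine card_le_card_of_injOn (fun t => ((t.2.2, ρ t.2.1), t.1)) (fun t ht => ?_) ?_
          · simp only [coe_filter, mem_product, mem_univ, true_and, Set.mem_ofPred_eq] at ht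
            simpa [path, hℓ, ht.1.1] using ht.2
          · intro t _ t' _ h
            simp only [Prod.mk.injEq, EmbeddingLike.apply_eq_iff_eq] at h
            exact Prod.ext h.2 (Prod.ext h.1.2 h.1.1)
      _ ≤ 2 ^ d * #A := by
          rw [card_product]; exact Nat.mul_le_mul_right _ (card_filter_splice_eq_le (ℓ - d) v)
      _ ≤ _ := Nat.mul_le_mul_left _ (le_max_left _ _)

theorem min_card_le_card_of_isSeparator {C : Finset (ℕ × (Fin d → Bool))}
    (hC : IsSeparator (pairStep d ρ) (2 * d) A B C) : min #A #B ≤ #C := by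
  by_contra! hlt
  set triples := A ×ˢ (univ : Finset (Fin d → Bool)) ×ˢ B
  set hits := C.biUnion fun c => triples.filter fun t => path ρ t.1 t.2.1 t.2.2 c.1 = c.2
  have hcard : #hits < #triples := calc
    #hits ≤ #C * (2 ^ d * max #A #B) :=
      card_biUnion_le_card_mul _ _ _ fun c _ => card_filter_path_eq_le ρ c.1 c.2
    _ < min #A #B * (2 ^ d * max #A #B) :=
      Nat.mul_lt_mul_of_pos_right hlt (Nat.mul_pos (by positivity) (by omega))
    _ = #triples := by
      rw [mul_left_comm, min_mul_max]
      simp [triples, card_product, mul_left_comm]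
  obtain ⟨t, ht, hnot⟩ := exists_mem_notMem_of_card_lt_card hcard
  obtain ⟨ha, hyb⟩ := mem_product.mp ht
  obtain ⟨ℓ, -, hmem⟩ := hC _ (isPath_path ρ t.1 t.2.1 t.2.2) ((path_zero ..).symm ▸ ha)
    ((path_two_mul ..).symm ▸ (mem_product.mp hyb).2)
  exact hnot (mem_biUnion.mpr ⟨_, hmem, mem_filter.mpr ⟨ht, rfl⟩⟩)

end Butterfly

theorem pair_of_butterflies_complement_concentrator_general
    (d : ℕ) (hd : 1 ≤ d) (m : ℕ)
    (ρ : (Fin d → Bool) ≃ (Fin d → Bool))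
    (A B : Finset (Fin d → Bool))
    (hA : A.card = 2 ^ d - 2 ^ m) (hB : B.card = 2 ^ d - 2 ^ m) :
    ∃ P : (Fin d → Bool) → ℕ → (Fin d → Bool),
      (∀ a ∈ A, P a 0 = a) ∧
      (∀ a ∈ A, ∀ i, i < 2 * d → pairStep d ρ i (P a i) (P a (i + 1))) ∧
      (∀ a ∈ A, ∀ a' ∈ A, a ≠ a' → ∀ i, i ≤ 2 * d → P a i ≠ P a' i) ∧
      A.image (fun a => P a (2 * d)) = B := by
  have hBA : B.card = A.card := hB.trans hA.symm
  refine Layered.exists_disjoint_paths (by omega) hBA fun C hC => ?_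
  simpa [hBA] using Butterfly.min_card_le_card_of_isSeparator ρ hC

/-- Every pair of `d`-dimensional butterflies is a `(2^d − 2^m)`-concentrator
(`0 ≤ m ≤ d`): for any set `A` of input (layer-`0`) nodes and any set `B` of output
(layer-`2d`) nodes with `|A| = |B| = 2^d − 2^m`, there is a family of pairwise
vertex-disjoint directed paths from `A` onto `B`. -/
theorem pair_of_butterflies_complement_concentrator
    (d : ℕ) (hd : 1 ≤ d) (m : ℕ) (hm : m ≤ d)
    (ρ : (Fin d → Bool) ≃ (Fin d → Bool))
    (A B : Finset (Fin d → Bool))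
    (hA : A.card = 2 ^ d - 2 ^ m) (hB : B.card = 2 ^ d - 2 ^ m) :
    ∃ P : (Fin d → Bool) → ℕ → (Fin d → Bool),
      (∀ a ∈ A, P a 0 = a) ∧
      (∀ a ∈ A, ∀ i, i < 2 * d → pairStep d ρ i (P a i) (P a (i + 1))) ∧
      (∀ a ∈ A, ∀ a' ∈ A, a ≠ a' → ∀ i, i ≤ 2 * d → P a i ≠ P a' i) ∧
      A.image (fun a => P a (2 * d)) = B :=
  pair_of_butterflies_complement_concentrator_general d hd m ρ A B hA hB
end

section
/- Let d ≥ 1, let ρ be any bijection of {0,1}^d, and let G be the pair of d-dimensional butterflies with gluing bijection ρ. Let A be a set of input nodes and B a set of output nodes with |A| = |B|. If there exists a node-disjoint routing from A to B, then there also exists a node-disjoint routing from the complement of A (within the set of all input nodes) to the complement of B (within the set of all output nodes). -/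
/-- `IsRouting d ρ A B P` says that `P` is a node-disjoint routing from the set `A` of
input (layer-`0`) nodes onto the set `B` of output (layer-`2d`) nodes: for each `a ∈ A`
the sequence `P a 0, P a 1, …, P a (2d)` is a directed path starting at `a`, no two of
these paths share a vertex (vertices on different layers are automatically distinct),
and the set of endpoints is exactly `B`. -/
def IsRouting (d : ℕ) (ρ : (Fin d → Bool) ≃ (Fin d → Bool))
    (A B : Finset (Fin d → Bool)) (P : (Fin d → Bool) → ℕ → (Fin d → Bool)) : Prop :=
  (∀ a ∈ A, P a 0 = a) ∧
  (∀ a ∈ A, ∀ i, i < 2 * d → pairStep d ρ i (P a i) (P a (i + 1))) ∧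
  (∀ a ∈ A, ∀ a' ∈ A, a ≠ a' → ∀ i, i ≤ 2 * d → P a i ≠ P a' i) ∧
  A.image (fun a => P a (2 * d)) = B

/-- Flip coordinate `j` of a label. -/
def flipC {d : ℕ} (j : Fin d) (b : Fin d → Bool) : Fin d → Bool :=
  Function.update b j (!(b j))

lemma flipC_apply_ne {d : ℕ} (j : Fin d) (b : Fin d → Bool) {k : Fin d} (hk : k ≠ j) :
    flipC j b k = b k :=
  Function.update_of_ne hk _ _

lemma flipC_apply_self {d : ℕ} (j : Fin d) (b : Fin d → Bool) :
    flipC j b j = !(b j) :=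
  Function.update_self _ _ _

lemma flipC_ne {d : ℕ} (j : Fin d) (b : Fin d → Bool) : flipC j b ≠ b := by
  intro h
  have := congrFun h j
  rw [flipC_apply_self] at this
  cases hb : b j <;> rw [hb] at this <;> simp at this

lemma flipC_flipC {d : ℕ} (j : Fin d) (b : Fin d → Bool) : flipC j (flipC j b) = b := by
  funext k
  by_cases hk : k = j
  · subst hk; rw [flipC_apply_self, flipC_apply_self]; simp
  · rw [flipC_apply_ne j _ hk, flipC_apply_ne j _ hk]

lemma flipC_injective {d : ℕ} (j : Fin d) : Function.Injective (flipC j) := by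
  intro x y h
  have := congrArg (flipC j) h
  rwa [flipC_flipC, flipC_flipC] at this

/-- The equivalence applied when crossing from layer `i` to layer `i+1`
(only the gluing step `i = d` applies `ρ`). -/
def sigA {d : ℕ} (ρ : (Fin d → Bool) ≃ (Fin d → Bool)) (i : ℕ) :
    (Fin d → Bool) ≃ (Fin d → Bool) :=
  if i = d then ρ else Equiv.refl _

/-- The coordinate that may change when going from layer `i` to layer `i+1`. -/
def jI (d : ℕ) (hd : 0 < d) (i : ℕ) : Fin d :=
  if h : i < d then ⟨i, h⟩ else ⟨(i - d) % d, Nat.mod_lt _ hd⟩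

lemma agree_off_iff {d : ℕ} (j : Fin d) (c b' : Fin d → Bool) :
    (∀ k : Fin d, k ≠ j → c k = b' k) ↔ (b' = c ∨ b' = flipC j c) := by
  constructor
  · intro h
    by_cases hj : b' j = c j
    · left
      funext k
      by_cases hk : k = j
      · subst hk; exact hj
      · exact (h k hk).symm
    · right
      funext k
      by_cases hk : k = j
      · subst hk
        rw [flipC_apply_self]
        cases hc : c k <;> cases hb : b' k <;> simp_all
      · rw [flipC_apply_ne j _ hk]
        exact (h k hk).symm
  · rintro (rfl | rfl) k hk
    · rfl
    · exact (flipC_apply_ne j _ hk).symm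

lemma pairStep_iff {d : ℕ} (hd : 0 < d) (ρ : (Fin d → Bool) ≃ (Fin d → Bool)) {i : ℕ}
    (hi : i < 2 * d) (b b' : Fin d → Bool) :
    pairStep d ρ i b b' ↔ (b' = sigA ρ i b ∨ b' = flipC (jI d hd i) (sigA ρ i b)) := by
  unfold pairStep sigA jI
  by_cases h : i < d
  · have hne : i ≠ d := by omega
    rw [dif_pos h, if_neg hne, dif_pos h]
    simp only [Equiv.refl_apply]
    exact agree_off_iff _ _ _
  · rw [dif_neg h, dif_pos hi, dif_neg h]
    have hje : (⟨(i - d) % d, Nat.mod_lt _ hd⟩ : Fin d) = ⟨i - d, by omega⟩ := by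
      apply Fin.ext
      simp only []
      exact Nat.mod_eq_of_lt (by omega)
    rw [hje]
    have hsig : (if i = d then ρ else Equiv.refl _) b = if i = d then ρ b else b := by
      by_cases hd' : i = d <;> simp [hd']
    rw [hsig] at *
    exact agree_off_iff _ _ _

/-- Iterate a layer-indexed family of maps. -/
def walk {α : Type*} (g : ℕ → α → α) (a : α) : ℕ → α
  | 0 => a
  | n + 1 => g n (walk g a n)

/-- If a pair of `d`-dimensional butterflies admits a node-disjoint routing from a set
`A` of input nodes to a set `B` of output nodes with `|A| = |B|`, then it also admits a
node-disjoint routing from the complement of `A` (within all input nodes) to the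
complement of `B` (within all output nodes). -/
theorem complement_routing
    (d : ℕ) (hd : 1 ≤ d) (ρ : (Fin d → Bool) ≃ (Fin d → Bool))
    (A B : Finset (Fin d → Bool)) (hAB : A.card = B.card)
    (h : ∃ P, IsRouting d ρ A B P) :
    ∃ P, IsRouting d ρ Aᶜ Bᶜ P := by
  classical
  have hd0 : 0 < d := hd
  obtain ⟨P, h0, hstep, hdisj, him⟩ := h
  set S : ℕ → Finset (Fin d → Bool) := fun i => A.image (fun a => P a i) with hS
  have hmemS : ∀ (i : ℕ) (x : Fin d → Bool), x ∈ S i ↔ ∃ a ∈ A, P a i = x := by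
    intro i x
    simp [hS, Finset.mem_image]
  have hstep' : ∀ a ∈ A, ∀ i, i < 2 * d →
      P a (i+1) = sigA ρ i (P a i) ∨ P a (i+1) = flipC (jI d hd0 i) (sigA ρ i (P a i)) := by
    intro a ha i hi
    exact (pairStep_iff hd0 ρ hi _ _).mp (hstep a ha i hi)
  -- key component-balance lemma
  have key : ∀ i, i < 2 * d → ∀ b, b ∉ S i → sigA ρ i b ∈ S (i+1) →
      (sigA ρ i).symm (flipC (jI d hd0 i) (sigA ρ i b)) ∈ S i ∧
      flipC (jI d hd0 i) (sigA ρ i b) ∉ S (i+1) := by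
    intro i hi b hb hmem
    obtain ⟨a, ha, hPa⟩ := (hmemS _ _).mp hmem
    have hPaI : P a i = (sigA ρ i).symm (flipC (jI d hd0 i) (sigA ρ i b)) := by
      rcases hstep' a ha i hi with hc | hc
      · exfalso
        apply hb
        have hab : P a i = b := (sigA ρ i).injective (hc.symm.trans hPa)
        exact (hmemS _ _).mpr ⟨a, ha, hab⟩
      · have h1 : flipC (jI d hd0 i) (sigA ρ i (P a i)) = sigA ρ i b := hc.symm.trans hPa
        have h2 : sigA ρ i (P a i) = flipC (jI d hd0 i) (sigA ρ i b) := by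
          have := congrArg (flipC (jI d hd0 i)) h1
          rwa [flipC_flipC] at this
        exact ((sigA ρ i).eq_symm_apply.mpr h2)
    constructor
    · rw [← hPaI]
      exact (hmemS _ _).mpr ⟨a, ha, rfl⟩
    · intro hmem2
      obtain ⟨a', ha', hPa'⟩ := (hmemS _ _).mp hmem2
      have hPaI' : P a' i = P a i := by
        rcases hstep' a' ha' i hi with hc | hc
        · rw [hPaI]
          exact (sigA ρ i).eq_symm_apply.mpr (hc.symm.trans hPa')
        · exfalso
          apply hb
          have h1 : flipC (jI d hd0 i) (sigA ρ i (P a' i)) =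
              flipC (jI d hd0 i) (sigA ρ i b) := hc.symm.trans hPa'
          have h2 : P a' i = b := (sigA ρ i).injective (flipC_injective _ h1)
          exact (hmemS _ _).mpr ⟨a', ha', h2⟩
      have hane : a ≠ a' := by
        intro hE
        subst hE
        have : sigA ρ i b = flipC (jI d hd0 i) (sigA ρ i b) := hPa.symm.trans hPa'
        exact flipC_ne _ _ this.symm
      exact hdisj a ha a' ha' hane i (le_of_lt hi) (hPaI'.symm)
  -- the complement step map
  set g : ℕ → (Fin d → Bool) → (Fin d → Bool) := fun i b =>
    if sigA ρ i b ∈ S (i+1) then flipC (jI d hd0 i) (sigA ρ i b) else sigA ρ i b with hgdef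
  have hg_step : ∀ i, i < 2 * d → ∀ b, pairStep d ρ i b (g i b) := by
    intro i hi b
    rw [pairStep_iff hd0 ρ hi]
    by_cases hmem : sigA ρ i b ∈ S (i+1)
    · right; simp [hgdef, hmem]
    · left; simp [hgdef, hmem]
  have hg_not : ∀ i, i < 2 * d → ∀ b, b ∉ S i → g i b ∉ S (i+1) := by
    intro i hi b hb
    by_cases hmem : sigA ρ i b ∈ S (i+1)
    · simpa [hgdef, hmem] using (key i hi b hb hmem).2
    · simp only [hgdef, if_neg hmem]
      exact hmem
  have hg_inj : ∀ i, i < 2 * d → ∀ b1 b2, b1 ∉ S i → b2 ∉ S i → b1 ≠ b2 →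
      g i b1 ≠ g i b2 := by
    intro i hi b1 b2 hb1 hb2 hne heq
    by_cases h1 : sigA ρ i b1 ∈ S (i+1) <;> by_cases h2 : sigA ρ i b2 ∈ S (i+1)
    · simp only [hgdef, if_pos h1, if_pos h2] at heq
      exact hne ((sigA ρ i).injective (flipC_injective _ heq))
    · simp only [hgdef, if_pos h1, if_neg h2] at heq
      apply hb2
      have := (key i hi b1 hb1 h1).1
      rwa [heq, Equiv.symm_apply_apply] at this
    · simp only [hgdef, if_neg h1, if_pos h2] at heq
      apply hb1
      have := (key i hi b2 hb2 h2).1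
      rwa [← heq, Equiv.symm_apply_apply] at this
    · simp only [hgdef, if_neg h1, if_neg h2] at heq
      exact hne ((sigA ρ i).injective heq)
  -- invariant along the walk
  have hS0 : S 0 = A := by
    ext x
    rw [hmemS]
    constructor
    · rintro ⟨a, ha, hax⟩
      rw [h0 a ha] at hax
      exact hax ▸ ha
    · intro hx
      exact ⟨x, hx, h0 x hx⟩
  have inv : ∀ i, i ≤ 2 * d →
      (∀ b, b ∉ A → walk g b i ∉ S i) ∧
      (∀ b1 b2, b1 ∉ A → b2 ∉ A → b1 ≠ b2 → walk g b1 i ≠ walk g b2 i) := by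
    intro i
    induction i with
    | zero =>
      intro _
      constructor
      · intro b hb
        rwa [hS0]
      · intro b1 b2 _ _ hne
        exact hne
    | succ n ih =>
      intro hn
      have hn' : n < 2 * d := by omega
      obtain ⟨ih1, ih2⟩ := ih (by omega)
      constructor
      · intro b hb
        exact hg_not n hn' _ (ih1 b hb)
      · intro b1 b2 hb1 hb2 hne
        exact hg_inj n hn' _ _ (ih1 b1 hb1) (ih1 b2 hb2) (ih2 b1 b2 hb1 hb2 hne)
  refine ⟨fun a i => walk g a i, ?_, ?_, ?_, ?_⟩
  · intro a _
    rfl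
  · intro a _ i hi
    exact hg_step i hi _
  · intro a ha a' ha' hne i hi
    exact (inv i hi).2 a a' (Finset.mem_compl.mp ha) (Finset.mem_compl.mp ha') hne
  · have hS2 : S (2 * d) = B := by rw [hS]; exact him
    have hsub : Aᶜ.image (fun a => walk g a (2 * d)) ⊆ Bᶜ := by
      intro x hx
      obtain ⟨a, ha, rfl⟩ := Finset.mem_image.mp hx
      rw [Finset.mem_compl, ← hS2]
      exact (inv _ le_rfl).1 a (Finset.mem_compl.mp ha)
    have hcardim : (Aᶜ.image (fun a => walk g a (2 * d))).card = Aᶜ.card := by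
      apply Finset.card_image_of_injOn
      intro b1 hb1 b2 hb2 heq
      by_contra hne
      exact (inv (2 * d) le_rfl).2 b1 b2 (Finset.mem_compl.mp hb1) (Finset.mem_compl.mp hb2)
        hne heq
    have hcard : Aᶜ.card = Bᶜ.card := by
      rw [Finset.card_compl, Finset.card_compl, hAB]
    exact Finset.eq_of_subset_of_card_le hsub (by rw [hcardim, hcard])
end

section
/- Let d ≥ 1, let ρ be any bijection of {0,1}^d, and let G be the pair of d-dimensional butterflies with gluing bijection ρ. Suppose that for every vertex u on layer ⌊d/2⌋ and every vertex v on layer 2d − ⌊d/2⌋ there is a directed path in G from u to v. Then for every set A of input nodes and every set B of output nodes with |A| = |B| ≤ 2^⌊d/2⌋, and every bijection φ : A → B, there exists a family of |A| directed paths, each visiting no vertex twice and no two sharing any vertex, such that for each a ∈ A one of the paths runs from a to φ(a). -/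
/-- `Reaches d ρ i b i' b'` says there is a directed path in the pair of butterflies
from the vertex with label `b` on layer `i` to the vertex with label `b'` on layer
`i'`. -/
def Reaches (d : ℕ) (ρ : (Fin d → Bool) ≃ (Fin d → Bool))
    (i : ℕ) (b : Fin d → Bool) (i' : ℕ) (b' : Fin d → Bool) : Prop :=
  ∃ f : ℕ → (Fin d → Bool), f i = b ∧ f i' = b' ∧
    ∀ j, i ≤ j → j < i' → pairStep d ρ j (f j) (f (j + 1))

open Finset

theorem Finset.geomSum_two_lt_add_of_filter_le_eq {s t : Finset ℕ} {j : ℕ}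
    (h : {n ∈ s | j ≤ n} = {n ∈ t | j ≤ n}) :
    ∑ n ∈ s, 2 ^ n < ∑ n ∈ t, 2 ^ n + 2 ^ j := by
  rw [← sum_filter_not_add_sum_filter s (j ≤ ·), ← sum_filter_not_add_sum_filter t (j ≤ ·), h]
  have hlow : ∑ n ∈ s with ¬ j ≤ n, 2 ^ n < 2 ^ j :=
    Nat.geomSum_lt le_rfl fun n hn => not_le.1 (mem_filter.1 hn).2
  omega

theorem Nat.not_modEq_count {p : ℕ → Prop} [DecidablePred p] {m n N : ℕ} (hm : p m)
    (hmn : m < n) (hnm : n < m + N) : ¬ count p m ≡ count p n [MOD N] := by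
  intro hmod
  have hlt : count p m < count p n := count_strict_mono hm hmn
  have hle : count p n ≤ count p m + (n - m) := by
    obtain ⟨k, rfl⟩ := Nat.exists_eq_add_of_le hmn.le
    rw [count_add]
    simpa using count_le _
  have := Nat.le_of_dvd (by omega) ((Nat.modEq_iff_dvd' hlt.le).1 hmod)
  omega

theorem Nat.modEq_two_pow_of_testBit_eq {r r' j : ℕ} (h : ∀ t < j, r.testBit t = r'.testBit t) :
    r ≡ r' [MOD 2 ^ j] :=
  Nat.eq_of_testBit_eq fun t => by
    simp only [Nat.testBit_mod_two_pow]
    by_cases ht : t < j <;> simp [ht, h]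

theorem Nat.eq_of_forall_Ico_succ {α : Type*} {f : ℕ → α} {a b : ℕ} (hab : a ≤ b)
    (h : ∀ j, a ≤ j → j < b → f (j + 1) = f j) : f b = f a := by
  induction b, hab using Nat.le_induction with
  | base => rfl
  | succ n han ih => rw [h n han n.lt_succ_self, ih fun j hj hjn => h j hj (by omega)]

namespace BitString

variable {d : ℕ}

def support (a : Fin d → Bool) : Finset ℕ := (univ.filter fun k => a k).map Fin.valEmbedding

theorem mem_support {a : Fin d → Bool} {n : ℕ} :
    n ∈ support a ↔ ∃ k : Fin d, a k ∧ (k : ℕ) = n := by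
  simp [support]

theorem support_injective : Function.Injective (support (d := d)) := by
  intro a a' h
  funext k
  have := congrArg (k.val ∈ ·) h
  simp only [mem_support, Fin.val_inj, exists_eq_right, eq_iff_iff] at this
  exact Bool.eq_iff_iff.2 this

def value (a : Fin d → Bool) : ℕ := ∑ n ∈ support a, 2 ^ n

theorem value_injective : Function.Injective (value (d := d)) :=
  (Finset.geomSum_injective le_rfl).comp support_injective

theorem value_lt_add_of_forall_le {a a' : Fin d → Bool} {j : ℕ}
    (h : ∀ k : Fin d, j ≤ k → a k = a' k) : value a < value a' + 2 ^ j := by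
  refine Finset.geomSum_two_lt_add_of_filter_le_eq ?_
  ext n
  simp only [mem_filter, mem_support]
  constructor
  · rintro ⟨⟨k, hk, rfl⟩, hj⟩
    exact ⟨⟨k, h k hj ▸ hk, rfl⟩, hj⟩
  · rintro ⟨⟨k, hk, rfl⟩, hj⟩
    exact ⟨⟨k, (h k hj).symm ▸ hk, rfl⟩, hj⟩

def rank (S : Finset (Fin d → Bool)) (a : Fin d → Bool) : ℕ :=
  Nat.count (· ∈ S.image value) (value a)

theorem rank_lt_card {S : Finset (Fin d → Bool)} {a : Fin d → Bool} (ha : a ∈ S) :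
    rank S a < #S := by
  calc rank S a < #(S.image value) :=
        (Nat.count_lt_card (p := (· ∈ S.image value)) (S.image value).finite_toSet
          (mem_image_of_mem _ ha)).trans_eq (congrArg card (S.image value).finite_toSet_toFinset)
    _ ≤ #S := card_image_le

theorem rank_injOn (S : Finset (Fin d → Bool)) : Set.InjOn (rank S) S := fun _ ha _ ha' h =>
  value_injective (Nat.count_injective (mem_image_of_mem _ ha) (mem_image_of_mem _ ha') h)

theorem not_rank_modEq {S : Finset (Fin d → Bool)} {a a' : Fin d → Bool} (ha : a ∈ S)
    (ha' : a' ∈ S) (hne : a ≠ a') {j : ℕ} (h : ∀ k : Fin d, j ≤ k → a k = a' k) :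
    ¬ rank S a ≡ rank S a' [MOD 2 ^ j] := by
  rcases lt_or_gt_of_ne (value_injective.ne hne) with hlt | hlt
  · exact Nat.not_modEq_count (mem_image_of_mem _ ha) hlt
      (value_lt_add_of_forall_le fun k hk => (h k hk).symm)
  · exact fun hmod => Nat.not_modEq_count (mem_image_of_mem _ ha') hlt
      (value_lt_add_of_forall_le h) hmod.symm

end BitString

namespace ButterflyPair

open BitString

variable {d : ℕ}

def splice (j : ℕ) (x y : Fin d → Bool) : Fin d → Bool := fun k => if (k : ℕ) < j then x k else y k

theorem splice_zero (x y : Fin d → Bool) : splice 0 x y = y := by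
  funext k
  simp [splice]

theorem splice_of_le {j : ℕ} (hj : d ≤ j) (x y : Fin d → Bool) : splice j x y = x := by
  funext k
  simp [splice, k.isLt.trans_le hj]

theorem splice_succ_apply {j : ℕ} (x y : Fin d → Bool) {k : Fin d} (hk : (k : ℕ) ≠ j) :
    splice (j + 1) x y k = splice j x y k := by
  simp only [splice]
  split_ifs <;> first | rfl | omega

theorem splice_comp_rev (j : ℕ) (x y : Fin d → Bool) :
    splice j x y ∘ Fin.rev = splice (d - j) (y ∘ Fin.rev) (x ∘ Fin.rev) := by
  funext k
  simp only [splice, Function.comp, Fin.val_rev]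
  split_ifs <;> first | rfl | omega

theorem splice_ne_splice {S : Finset (Fin d → Bool)} {h : ℕ} (hS : #S ≤ 2 ^ h) (hh : h ≤ d)
    {a a' : Fin d → Bool} (ha : a ∈ S) (ha' : a' ∈ S) (hne : a ≠ a') {x x' : Fin d → Bool}
    (hx : ∀ k : Fin d, (k : ℕ) < h → x k = (rank S a).testBit k)
    (hx' : ∀ k : Fin d, (k : ℕ) < h → x' k = (rank S a').testBit k) (j : ℕ) :
    splice j x a ≠ splice j x' a' := by
  intro heq
  have hbits : ∀ t < min j h, (rank S a).testBit t = (rank S a').testBit t := fun t ht => by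
    have hlow := congrFun heq ⟨t, by omega⟩
    simp only [splice, show t < j by omega, if_true] at hlow
    rw [← hx ⟨t, by omega⟩ (by simp; omega), ← hx' ⟨t, by omega⟩ (by simp; omega), hlow]
  have hmod := Nat.modEq_two_pow_of_testBit_eq hbits
  rcases le_total j h with hjh | hhj
  · rw [min_eq_left hjh] at hmod
    refine not_rank_modEq ha ha' hne (fun k hk => ?_) hmod
    simpa [splice, not_lt.2 hk] using congrFun heq k
  · rw [min_eq_right hhj] at hmod
    exact hne (rank_injOn S ha ha' (hmod.eq_of_lt_of_lt ((rank_lt_card ha).trans_le hS)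
      ((rank_lt_card ha').trans_le hS)))

variable {ρ : (Fin d → Bool) ≃ (Fin d → Bool)} {j : ℕ} {b b' : Fin d → Bool}

theorem pairStep_iff_of_lt (hj : j < d) :
    pairStep d ρ j b b' ↔ ∀ k : Fin d, (k : ℕ) ≠ j → b k = b' k := by
  simp [pairStep, hj, Fin.ext_iff]

theorem pairStep_self_iff (hd : 0 < d) :
    pairStep d ρ d b b' ↔ ∀ k : Fin d, (k : ℕ) ≠ 0 → ρ b k = b' k := by
  simp [pairStep, hd, Fin.ext_iff]

theorem pairStep_iff_of_lt_of_lt (hdj : d < j) (hj : j < 2 * d) :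
    pairStep d ρ j b b' ↔ ∀ k : Fin d, (k : ℕ) + d ≠ j → b k = b' k := by
  simp only [pairStep, dif_neg hdj.not_gt, dif_pos hj, if_neg hdj.ne', ne_eq, Fin.ext_iff]
  refine forall_congr' fun k => imp_congr_left (not_congr ?_)
  omega

theorem exists_mid_of_reaches {i i' : ℕ} {u v : Fin d → Bool} (hR : Reaches d ρ i u i' v)
    (hi : i ≤ d) (hdi' : d < i') (hi' : i' ≤ 2 * d) :
    ∃ w : Fin d → Bool, (∀ k : Fin d, (k : ℕ) < i → w k = u k) ∧
      ∀ k : Fin d, i' - d ≤ k → ρ w k = v k := by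
  obtain ⟨f, rfl, rfl, hf⟩ := hR
  refine ⟨f d, fun k hk => ?_, fun k hk => ?_⟩
  · refine Nat.eq_of_forall_Ico_succ (f := (f · k)) hi fun j hij hjd => ?_
    exact ((pairStep_iff_of_lt hjd).1 (hf j hij (by omega)) k (by omega)).symm
  · rw [(pairStep_self_iff (by omega)).1 (hf d hi hdi') k (by omega)]
    refine (Nat.eq_of_forall_Ico_succ (f := (f · k)) hdi' fun j hij hji' => ?_).symm
    exact ((pairStep_iff_of_lt_of_lt hij (by omega)).1 (hf j (by omega) hji') k (by omega)).symm

variable (ρ) in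
def route (a w b : Fin d → Bool) (i : ℕ) : Fin d → Bool :=
  if i ≤ d then splice i w a else splice (i - d) b (ρ w)

variable {a w : Fin d → Bool}

theorem route_of_le {i : ℕ} (hi : i ≤ d) : route ρ a w b i = splice i w a := if_pos hi

theorem route_of_lt {i : ℕ} (hi : d < i) : route ρ a w b i = splice (i - d) b (ρ w) :=
  if_neg hi.not_ge

theorem route_zero : route ρ a w b 0 = a := by
  rw [route_of_le (Nat.zero_le d), splice_zero]

theorem route_two_mul (hd : 0 < d) : route ρ a w b (2 * d) = b := by
  rw [route_of_lt (by omega), splice_of_le (by omega)]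

theorem pairStep_route (hd : 0 < d) {i : ℕ} (hi : i < 2 * d) :
    pairStep d ρ i (route ρ a w b i) (route ρ a w b (i + 1)) := by
  rcases lt_trichotomy i d with hid | hid | hdi
  · rw [pairStep_iff_of_lt hid, route_of_le hid.le, route_of_le hid]
    exact fun k hk => (splice_succ_apply w a hk).symm
  · rw [hid, pairStep_self_iff hd, route_of_le le_rfl, route_of_lt (by omega),
      splice_of_le le_rfl, Nat.add_sub_cancel_left]
    exact fun k hk => by rw [splice_succ_apply b (ρ w) hk, splice_zero]
  · rw [pairStep_iff_of_lt_of_lt hdi hi, route_of_lt hdi, route_of_lt (by omega),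
      show i + 1 - d = i - d + 1 by omega]
    exact fun k hk => (splice_succ_apply b (ρ w) (by omega)).symm

end ButterflyPair

open ButterflyPair BitString

theorem mini_rearrangeability_general
    (d : ℕ) (hd : 1 ≤ d) (ρ : (Fin d → Bool) ≃ (Fin d → Bool))
    (hconn : ∀ u v : Fin d → Bool, Reaches d ρ (d / 2) u (2 * d - d / 2) v)
    (A : Finset (Fin d → Bool))
    (hsize : A.card ≤ 2 ^ (d / 2))
    (φ : (Fin d → Bool) → (Fin d → Bool))
    (hinj : Set.InjOn φ ↑A) :
    ∃ P : (Fin d → Bool) → ℕ → (Fin d → Bool),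
      (∀ a ∈ A, P a 0 = a) ∧
      (∀ a ∈ A, ∀ i, i < 2 * d → pairStep d ρ i (P a i) (P a (i + 1))) ∧
      (∀ a ∈ A, ∀ a' ∈ A, a ≠ a' → ∀ i, i ≤ 2 * d → P a i ≠ P a' i) ∧
      (∀ a ∈ A, P a (2 * d) = φ a) := by
  set T := A.image fun a => φ a ∘ Fin.rev
  have hT : #T ≤ 2 ^ (d / 2) := card_image_le.trans hsize
  choose w hwA hwT using fun a => exists_mid_of_reaches
    (hconn (fun k => (rank A a).testBit k) (fun k => (rank T (φ a ∘ Fin.rev)).testBit (Fin.rev k)))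
    (Nat.div_le_self d 2) (by omega) (by omega)
  have hwT' (a : Fin d → Bool) (k : Fin d) (hk : (k : ℕ) < d / 2) :
      (ρ (w a) ∘ Fin.rev) k = (rank T (φ a ∘ Fin.rev)).testBit k := by
    simpa using hwT a k.rev (by simp; omega)
  refine ⟨fun a => route ρ a (w a) (φ a), fun a _ => route_zero,
    fun a _ i hi => pairStep_route hd hi, ?_, fun a _ => route_two_mul hd⟩
  intro a ha a' ha' hne i _
  rcases le_or_gt i d with hid | hdi
  · simp only [route_of_le hid]
    exact splice_ne_splice hsize (Nat.div_le_self d 2) ha ha' hne (hwA a) (hwA a') i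
  · simp only [route_of_lt hdi]
    intro heq
    refine splice_ne_splice hT (Nat.div_le_self d 2) (mem_image_of_mem _ ha)
      (mem_image_of_mem _ ha') ?_ (hwT' a) (hwT' a') (d - (i - d)) ?_
    · exact fun h => hne (hinj ha ha' (Fin.rev_surjective.injective_comp_right h))
    · rw [← splice_comp_rev, ← splice_comp_rev, heq]

/-- Suppose in a pair of `d`-dimensional butterflies every vertex on layer `⌊d/2⌋` can
reach every vertex on layer `2d − ⌊d/2⌋` by a directed path.  Then for every set `A` of
input nodes and every set `B` of output nodes with `|A| = |B| ≤ 2^⌊d/2⌋` and every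
bijection `φ` from `A` onto `B`, there is a family of pairwise vertex-disjoint directed
paths routing each `a ∈ A` to `φ a`. -/
theorem mini_rearrangeability
    (d : ℕ) (hd : 1 ≤ d) (ρ : (Fin d → Bool) ≃ (Fin d → Bool))
    (hconn : ∀ u v : Fin d → Bool, Reaches d ρ (d / 2) u (2 * d - d / 2) v)
    (A B : Finset (Fin d → Bool)) (hAB : A.card = B.card)
    (hsize : A.card ≤ 2 ^ (d / 2))
    (φ : (Fin d → Bool) → (Fin d → Bool))
    (hmem : ∀ a ∈ A, φ a ∈ B) (hinj : Set.InjOn φ ↑A) (himg : A.image φ = B) :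
    ∃ P : (Fin d → Bool) → ℕ → (Fin d → Bool),
      (∀ a ∈ A, P a 0 = a) ∧
      (∀ a ∈ A, ∀ i, i < 2 * d → pairStep d ρ i (P a i) (P a (i + 1))) ∧
      (∀ a ∈ A, ∀ a' ∈ A, a ≠ a' → ∀ i, i ≤ 2 * d → P a i ≠ P a' i) ∧
      (∀ a ∈ A, P a (2 * d) = φ a) :=
  mini_rearrangeability_general d hd ρ hconn A hsize φ hinj
end

section
/- Let p be a real number with 0 < p < 1, and set D = (1−p)(2−p). Define π_X = 1 − (3/2)p, π₁(0) = (1 − (3/2)p)·p/(1−p), π₁(n) = (1 − (3/2)p)·(2−p)·p^{2n}/D^{n+1} for integers n ≥ 1, and π₂(n) = (1 − (3/2)p)·p^{2n+1}/D^{n+1} for integers n ≥ 0. Then the following balance identities hold: (i) π_X = (1−p)·(π_X + π₁(0)); (ii) π₂(0) = (p/2)·(π_X + π₁(0)) + ((1−p)/2)·π₁(1); (iii) for every n ≥ 1, π₂(n) = (p/2)·π₁(n) + ((1−p)/2)·π₁(n+1); and (iv) for every n ≥ 1, π₁(n) = (2−p)·π₂(n) + p·π₂(n−1). -/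
/-!
With `D = (1 - p)(2 - p)`, the queue-length profile is geometric: `π₂(n + 1) = (p² / D) π₂(n)` and
`π₁(n + 1) = ((2 - p) p / D) π₂(n)`. Substituting these two recursions, every balance identity
reduces, after clearing the denominators `1 - p` and `2 - p`, to a polynomial identity in `p`, the
essential one being `(2 - p) p + (1 - p)(2 - p) = 2 - p`.
-/

/-- Stationary probability of the empty (ground) state of the one-node `L = 2`
Bernoulli ring under the Greedy Hot Potato protocol. -/
noncomputable def ghpPiX (p : ℝ) : ℝ := 1 - (3 / 2) * p

/-- Stationary probability of holding a hot-potato packet with `1` step left to travel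
and `n` packets in queue. -/
noncomputable def ghpPi1 (p : ℝ) : ℕ → ℝ := fun n =>
  if n = 0 then (1 - (3 / 2) * p) * p / (1 - p)
  else (1 - (3 / 2) * p) * (2 - p) * p ^ (2 * n) / ((1 - p) * (2 - p)) ^ (n + 1)

/-- Stationary probability of holding a hot-potato packet with `2` steps left to travel
and `n` packets in queue. -/
noncomputable def ghpPi2 (p : ℝ) : ℕ → ℝ := fun n =>
  (1 - (3 / 2) * p) * p ^ (2 * n + 1) / ((1 - p) * (2 - p)) ^ (n + 1)

theorem ghpPi1_zero (p : ℝ) : ghpPi1 p 0 = (1 - (3 / 2) * p) * p / (1 - p) := if_pos rfl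

theorem ghpPi1_succ (p : ℝ) (n : ℕ) :
    ghpPi1 p (n + 1) = (2 - p) * p / ((1 - p) * (2 - p)) * ghpPi2 p n := by
  rw [ghpPi1, if_neg n.succ_ne_zero, ghpPi2]
  generalize (1 - p) * (2 - p) = D
  ring

theorem ghpPi2_succ (p : ℝ) (n : ℕ) :
    ghpPi2 p (n + 1) = p ^ 2 / ((1 - p) * (2 - p)) * ghpPi2 p n := by
  rw [ghpPi2, ghpPi2]
  generalize (1 - p) * (2 - p) = D
  ring

section Balance

variable {p : ℝ} (h1 : 1 - p ≠ 0) (h2 : 2 - p ≠ 0)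
include h1

theorem ghpPiX_balance : ghpPiX p = (1 - p) * (ghpPiX p + ghpPi1 p 0) := by
  rw [ghpPi1_zero, ghpPiX]
  field_simp
  ring

include h2

theorem ghpPi2_zero_balance :
    ghpPi2 p 0 = (p / 2) * (ghpPiX p + ghpPi1 p 0) + ((1 - p) / 2) * ghpPi1 p 1 := by
  rw [ghpPi1_succ, ghpPi1_zero, ghpPiX, ghpPi2]
  field_simp
  ring

theorem ghpPi2_succ_balance (n : ℕ) :
    ghpPi2 p (n + 1) = (p / 2) * ghpPi1 p (n + 1) + ((1 - p) / 2) * ghpPi1 p (n + 2) := by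
  rw [ghpPi1_succ, ghpPi1_succ, ghpPi2_succ]
  field_simp
  ring

theorem ghpPi1_succ_balance (n : ℕ) :
    ghpPi1 p (n + 1) = (2 - p) * ghpPi2 p (n + 1) + p * ghpPi2 p n := by
  rw [ghpPi1_succ, ghpPi2_succ]
  field_simp
  ring

end Balance

theorem ghp_balance_identities_general (p : ℝ) (hp1 : p < 1) :
    (ghpPiX p = (1 - p) * (ghpPiX p + ghpPi1 p 0)) ∧
    (ghpPi2 p 0 = (p / 2) * (ghpPiX p + ghpPi1 p 0) + ((1 - p) / 2) * ghpPi1 p 1) ∧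
    (∀ n : ℕ, 1 ≤ n →
      ghpPi2 p n = (p / 2) * ghpPi1 p n + ((1 - p) / 2) * ghpPi1 p (n + 1)) ∧
    (∀ n : ℕ, 1 ≤ n →
      ghpPi1 p n = (2 - p) * ghpPi2 p n + p * ghpPi2 p (n - 1)) := by
  have h1 : 1 - p ≠ 0 := by linarith
  have h2 : 2 - p ≠ 0 := by linarith
  refine ⟨ghpPiX_balance h1, ghpPi2_zero_balance h1 h2, ?_, ?_⟩
  · rintro (_ | n) hn
    · omega
    exact ghpPi2_succ_balance h1 h2 n
  · rintro (_ | n) hn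
    · omega
    exact ghpPi1_succ_balance h1 h2 n

/-- Balance identities verifying the stationary distribution of the Greedy Hot Potato
chain on a one-node `L = 2` nonstandard Bernoulli ring with arrival probability
`0 < p < 1`:
(i) `π_X = (1−p)·(π_X + π₁(0))`;
(ii) `π₂(0) = (p/2)·(π_X + π₁(0)) + ((1−p)/2)·π₁(1)`;
(iii) for `n ≥ 1`, `π₂(n) = (p/2)·π₁(n) + ((1−p)/2)·π₁(n+1)`;
(iv) for `n ≥ 1`, `π₁(n) = (2−p)·π₂(n) + p·π₂(n−1)`. -/
theorem ghp_balance_identities (p : ℝ) (hp0 : 0 < p) (hp1 : p < 1) :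
    (ghpPiX p = (1 - p) * (ghpPiX p + ghpPi1 p 0)) ∧
    (ghpPi2 p 0 = (p / 2) * (ghpPiX p + ghpPi1 p 0) + ((1 - p) / 2) * ghpPi1 p 1) ∧
    (∀ n : ℕ, 1 ≤ n →
      ghpPi2 p n = (p / 2) * ghpPi1 p n + ((1 - p) / 2) * ghpPi1 p (n + 1)) ∧
    (∀ n : ℕ, 1 ≤ n →
      ghpPi1 p n = (2 - p) * ghpPi2 p n + p * ghpPi2 p (n - 1)) :=
  ghp_balance_identities_general p hp1
end
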